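/- arXiv:1807.10639 — 8 statements merged into one kernel-verified Lean document; each statement's English description precedes it below -/
import Mathlib

section
/- For any normalized, monotone, submodular function f on subsets of a finite set S, and any action sets X_1,...,X_n where each agent i greedily selects x_i maximizing f(x_i ∪ x_1 ∪ ... ∪ x_{i-1}) over X_i (the full greedy with complete information), the resulting solution satisfies f(x^sol) ≥ (1/2) f(x^opt), where x^opt is an optimal choice from X_1 × ... × X_n. -/
open Finset

/-- Set version of submodularity derived from the single-element version. -/
lemma key_submod {α : Type*} [DecidableEq α]
    (f : Finset α → ℝ)
    (hmono : ∀ A B : Finset α, A ⊆ B → f A ≤ f B)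
    (hsub : ∀ A B : Finset α, A ⊆ B → ∀ x ∉ B,
      f (insert x B) - f B ≤ f (insert x A) - f A) :
    ∀ (C A B : Finset α), A ⊆ B → f (B ∪ C) - f B ≤ f (A ∪ C) - f A := by
  intro C
  induction C using Finset.induction_on with
  | empty => intro A B hAB; simp
  | @insert x s hx IH =>
    intro A B hAB
    rw [Finset.union_insert, Finset.union_insert]
    by_cases hxB : x ∈ B ∪ s
    · rw [Finset.insert_eq_self.2 hxB]
      have h1 := IH A B hAB
      have h2 : f (A ∪ s) ≤ f (insert x (A ∪ s)) :=
        hmono _ _ (Finset.subset_insert _ _)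
      linarith
    · have h3 := hsub (A ∪ s) (B ∪ s) (Finset.union_subset_union_left hAB) x hxB
      have h1 := IH A B hAB
      linarith

lemma biUnion_filter_succ {α : Type*} [DecidableEq α] {n : ℕ}
    (g : Fin n → Finset α) (k : ℕ) (hk : k < n) :
    (univ.filter (fun j : Fin n => (j : ℕ) < k + 1)).biUnion g =
      g ⟨k, hk⟩ ∪ (univ.filter (fun j : Fin n => (j : ℕ) < k)).biUnion g := by
  ext a
  simp only [mem_union, mem_biUnion, mem_filter, mem_univ, true_and]
  constructor
  · rintro ⟨j, hj, ha⟩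
    by_cases h : (j : ℕ) = k
    · left
      have : j = ⟨k, hk⟩ := Fin.ext h
      rwa [this] at ha
    · right; exact ⟨j, by omega, ha⟩
  · rintro (ha | ⟨j, hj, ha⟩)
    · exact ⟨⟨k, hk⟩, by simp, ha⟩
    · exact ⟨j, by omega, ha⟩

/-- full-information distributed greedy achieves 1/2 of optimal for
normalized monotone submodular `f`. -/
theorem greedy_half_approx {α : Type*} [DecidableEq α] {n : ℕ}
    (f : Finset α → ℝ)
    (hnorm : f ∅ = 0)
    (hmono : ∀ A B : Finset α, A ⊆ B → f A ≤ f B)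
    (hsub : ∀ A B : Finset α, A ⊆ B → ∀ x ∉ B,
      f (insert x B) - f B ≤ f (insert x A) - f A)
    (X : Fin n → Finset (Finset α))
    (sol opt : Fin n → Finset α)
    (hsolX : ∀ i, sol i ∈ X i)
    (hgreedy : ∀ i : Fin n, ∀ y ∈ X i,
      f (y ∪ (univ.filter (fun j => j < i)).biUnion sol) ≤
        f (sol i ∪ (univ.filter (fun j => j < i)).biUnion sol))
    (hoptX : ∀ i, opt i ∈ X i)
    (hopt : ∀ y : Fin n → Finset α, (∀ i, y i ∈ X i) →
      f (univ.biUnion y) ≤ f (univ.biUnion opt)) :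
    f (univ.biUnion opt) ≤ 2 * f (univ.biUnion sol) := by
  have key := key_submod f hmono hsub
  set A : Finset α := univ.biUnion sol with hA
  set P : ℕ → Finset α :=
    fun k => (univ.filter (fun j : Fin n => (j : ℕ) < k)).biUnion sol with hP
  set Q : ℕ → Finset α :=
    fun k => A ∪ (univ.filter (fun j : Fin n => (j : ℕ) < k)).biUnion opt with hQ
  have hP0 : P 0 = ∅ := by simp [hP]
  have hPn : P n = A := by
    simp only [hP, hA]
    congr 1
    ext j
    simp [j.isLt]
  have hQ0 : Q 0 = A := by simp [hQ]
  have hQn : Q n = A ∪ univ.biUnion opt := by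
    simp only [hQ]
    congr 2
    ext j
    simp [j.isLt]
  have hPsub : ∀ k, P k ⊆ A := by
    intro k
    exact biUnion_subset_biUnion_of_subset_left sol (filter_subset _ _)
  -- per-step inequality
  have step : ∀ k ∈ Finset.range n,
      f (Q (k + 1)) - f (Q k) ≤ f (P (k + 1)) - f (P k) := by
    intro k hk
    rw [Finset.mem_range] at hk
    obtain ⟨i, hik⟩ : ∃ i : Fin n, i = (⟨k, hk⟩ : Fin n) := ⟨⟨k, hk⟩, rfl⟩
    have hQs : Q (k + 1) = Q k ∪ opt i := by
      simp only [hQ]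
      rw [biUnion_filter_succ opt k hk, ← hik, union_left_comm, union_comm (opt i)]
    have hPs : P (k + 1) = sol i ∪ P k := by
      simp only [hP]
      rw [biUnion_filter_succ sol k hk, ← hik]
    have h1 : f (Q k ∪ opt i) - f (Q k) ≤ f (A ∪ opt i) - f A :=
      key (opt i) A (Q k) (subset_union_left)
    have h2 : f (A ∪ opt i) - f A ≤ f (P k ∪ opt i) - f (P k) :=
      key (opt i) (P k) A (hPsub k)
    have hfilter : (univ.filter (fun j : Fin n => j < i)) =
        (univ.filter (fun j : Fin n => (j : ℕ) < k)) := by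
      apply filter_congr
      intro j _
      simp [Fin.lt_def, hik]
    have h3 : f (opt i ∪ P k) ≤ f (sol i ∪ P k) := by
      have := hgreedy i (opt i) (hoptX i)
      rwa [hfilter] at this
    rw [hQs, hPs]
    rw [union_comm (opt i) (P k)] at h3
    linarith
  have tele1 : ∑ k ∈ Finset.range n, (f (Q (k + 1)) - f (Q k)) = f (Q n) - f (Q 0) :=
    Finset.sum_range_sub (fun k => f (Q k)) n
  have tele2 : ∑ k ∈ Finset.range n, (f (P (k + 1)) - f (P k)) = f (P n) - f (P 0) :=
    Finset.sum_range_sub (fun k => f (P k)) n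
  have hsum : f (Q n) - f (Q 0) ≤ f (P n) - f (P 0) := by
    rw [← tele1, ← tele2]
    exact Finset.sum_le_sum step
  have hmonoQ : f (univ.biUnion opt) ≤ f (Q n) := by
    rw [hQn]; exact hmono _ _ subset_union_right
  rw [hQ0, hPn, hP0, hnorm] at hsum
  linarith
end

section
/- For any directed acyclic graph G whose edges respect an ordering (edge (i,j) implies i < j), the worst-case efficiency γ(G) of the generalized distributed greedy algorithm satisfies γ(G) ≥ 1/(α*(G) + 1), where α*(G) is the fractional independence number (the optimal value of the LP relaxation of the maximum independent set problem over all cliques of G). -/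
/-!
Let `N i` be the union of the choices of the in-neighbours of agent `i` and `Δ i` the gain
`f (sol i ∪ N i) - f (N i)` of its greedy choice. By submodularity, adding the optimal choices
to `sol` one at a time gives `f opt ≤ f sol + ∑ i, (f (opt i ∪ N i) - f (N i))`, and greediness
bounds each term by `Δ i`. On a clique, the in-neighbourhood of the last member contains the
choices of all the others, so the gains over a clique telescope to at most `f sol`. Hence
`Δ / f sol` is a fractional independent set, and `∑ i, Δ i ≤ α* · f sol`.
-/

open Finset

section Submodular

variable {α : Type*} [DecidableEq α] {f : Finset α → ℝ}

def marginal (f : Finset α → ℝ) (A B : Finset α) : ℝ := f (A ∪ B) - f B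

lemma insert_sub_le_insert_sub_of_subset
    (hmono : ∀ A B : Finset α, A ⊆ B → f A ≤ f B)
    (hsub : ∀ A B : Finset α, A ⊆ B → ∀ x ∉ B,
      f (insert x B) - f B ≤ f (insert x A) - f A)
    {A B : Finset α} (hAB : A ⊆ B) (x : α) :
    f (insert x B) - f B ≤ f (insert x A) - f A := by
  by_cases hx : x ∈ B
  · rw [insert_eq_self.2 hx, sub_self, sub_nonneg]
    exact hmono _ _ (subset_insert x A)
  · exact hsub A B hAB x hx

lemma marginal_le_marginal_of_subset
    (hmono : ∀ A B : Finset α, A ⊆ B → f A ≤ f B)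
    (hsub : ∀ A B : Finset α, A ⊆ B → ∀ x ∉ B,
      f (insert x B) - f B ≤ f (insert x A) - f A)
    (C : Finset α) {A B : Finset α} (hAB : A ⊆ B) :
    marginal f C B ≤ marginal f C A := by
  induction C using Finset.induction_on generalizing A B with
  | empty => simp [marginal]
  | @insert x C _ ih =>
    have hx := insert_sub_le_insert_sub_of_subset hmono hsub
      (union_subset_union_right (s := C) hAB) x
    have hC := ih hAB
    simp only [marginal, insert_union] at hx hC ⊢
    linarith

lemma marginal_biUnion_le_sum_marginal {ι : Type*} [DecidableEq ι]
    (hmono : ∀ A B : Finset α, A ⊆ B → f A ≤ f B)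
    (hsub : ∀ A B : Finset α, A ⊆ B → ∀ x ∉ B,
      f (insert x B) - f B ≤ f (insert x A) - f A)
    (y N : ι → Finset α) {S : Finset α} (s : Finset ι) (hN : ∀ i ∈ s, N i ⊆ S) :
    marginal f (s.biUnion y) S ≤ ∑ i ∈ s, marginal f (y i) (N i) := by
  induction s using Finset.induction_on with
  | empty => simp [marginal]
  | @insert a s ha ih =>
    have hstep : marginal f (y a) (s.biUnion y ∪ S) ≤ marginal f (y a) (N a) :=
      marginal_le_marginal_of_subset hmono hsub (y a)
        ((hN a (mem_insert_self a s)).trans subset_union_right)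
    have hs := ih fun i hi => hN i (mem_insert_of_mem hi)
    rw [sum_insert ha]
    simp only [marginal, biUnion_insert, union_assoc] at hstep hs ⊢
    linarith

lemma sum_marginal_le_marginal_biUnion {ι : Type*} [LinearOrder ι]
    (hmono : ∀ A B : Finset α, A ⊆ B → f A ≤ f B)
    (hsub : ∀ A B : Finset α, A ⊆ B → ∀ x ∉ B,
      f (insert x B) - f B ≤ f (insert x A) - f A)
    (x N : ι → Finset α) (c : Finset ι)
    (hN : ∀ i ∈ c, ∀ j ∈ c, j < i → x j ⊆ N i) :
    ∑ i ∈ c, marginal f (x i) (N i) ≤ marginal f (c.biUnion x) ∅ := by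
  induction c using Finset.induction_on_max with
  | empty => simp [marginal]
  | insert a s hlt ih =>
    have ha : a ∉ s := fun h => lt_irrefl a (hlt a h)
    have hstep : marginal f (x a) (N a) ≤ marginal f (x a) (s.biUnion x) :=
      marginal_le_marginal_of_subset hmono hsub (x a) <| biUnion_subset.2 fun j hj =>
        hN a (mem_insert_self a s) j (mem_insert_of_mem hj) (hlt j hj)
    have hs := ih fun i hi j hj hji => hN i (mem_insert_of_mem hi) j (mem_insert_of_mem hj) hji
    rw [sum_insert ha]
    simp only [marginal, biUnion_insert, union_empty] at hstep hs ⊢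
    linarith

end Submodular

def fractionalPackingValues {ι : Type*} [Fintype ι] (P : Finset ι → Prop) : Set ℝ :=
  {s | ∃ z : ι → ℝ, (∀ i, 0 ≤ z i) ∧ (∀ c, P c → ∑ i ∈ c, z i ≤ 1) ∧ s = ∑ i, z i}

/-- `w / M` is a feasible point; the singleton constraints `P {i}` cover the case `M = 0`. -/
lemma sum_le_mul_of_isGreatest_fractionalPackingValues {ι : Type*} [Fintype ι]
    {P : Finset ι → Prop} {astar M : ℝ} (hastar : IsGreatest (fractionalPackingValues P) astar)
    (hP : ∀ i, P {i}) (hM : 0 ≤ M) {w : ι → ℝ} (hw : ∀ i, 0 ≤ w i)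
    (hwP : ∀ c, P c → ∑ i ∈ c, w i ≤ M) :
    ∑ i, w i ≤ astar * M := by
  rcases hM.eq_or_lt with rfl | hM
  · have hw0 : ∀ i, w i = 0 := fun i => le_antisymm (by simpa using hwP {i} (hP i)) (hw i)
    simp [hw0]
  · have hmem : ∑ i, w i / M ∈ fractionalPackingValues P :=
      ⟨fun i => w i / M, fun i => div_nonneg (hw i) hM.le,
        fun c hc => by rw [← sum_div, div_le_one hM]; exact hwP c hc, rfl⟩
    have := hastar.2 hmem
    rwa [← sum_div, div_le_iff₀ hM] at this

theorem generalized_greedy_lower_bound_general {α : Type*} [DecidableEq α] {n : ℕ}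
    (E : Fin n → Fin n → Prop) [DecidableRel E]
    (hE : ∀ i j, E i j → i < j)
    (astar : ℝ)
    (hastar : IsGreatest {s : ℝ | ∃ z : Fin n → ℝ,
      (∀ i, 0 ≤ z i) ∧
      (∀ c : Finset (Fin n), (∀ i ∈ c, ∀ j ∈ c, i ≠ j → E i j ∨ E j i) →
        ∑ i ∈ c, z i ≤ 1) ∧
      s = ∑ i, z i} astar)
    (f : Finset α → ℝ)
    (hnorm : f ∅ = 0)
    (hmono : ∀ A B : Finset α, A ⊆ B → f A ≤ f B)
    (hsub : ∀ A B : Finset α, A ⊆ B → ∀ x ∉ B,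
      f (insert x B) - f B ≤ f (insert x A) - f A)
    (X : Fin n → Finset (Finset α))
    (sol opt : Fin n → Finset α)
    (hgreedy : ∀ i : Fin n, ∀ y ∈ X i,
      f (y ∪ (univ.filter (fun j => E j i)).biUnion sol) ≤
        f (sol i ∪ (univ.filter (fun j => E j i)).biUnion sol))
    (hoptX : ∀ i, opt i ∈ X i) :
    f (univ.biUnion opt) ≤ (astar + 1) * f (univ.biUnion sol) := by
  set N : Fin n → Finset α := fun i => (univ.filter (fun j => E j i)).biUnion sol
  set S := univ.biUnion sol
  have hNS : ∀ i ∈ univ, N i ⊆ S := fun i _ =>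
    biUnion_subset_biUnion_of_subset_left _ (subset_univ _)
  have hclique : ∀ c : Finset (Fin n), (∀ i ∈ c, ∀ j ∈ c, i ≠ j → E i j ∨ E j i) →
      ∑ i ∈ c, marginal f (sol i) (N i) ≤ f S := by
    intro c hc
    refine (sum_marginal_le_marginal_biUnion hmono hsub sol N c fun i hi j hj hji => ?_).trans ?_
    · have hEji : E j i := (hc j hj i hi hji.ne).resolve_right fun h => (hE i j h).not_gt hji
      exact subset_biUnion_of_mem sol (mem_filter.2 ⟨mem_univ j, hEji⟩)
    · simpa [marginal, hnorm] using
        hmono _ _ (biUnion_subset_biUnion_of_subset_left sol (subset_univ c))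
  have hgains : ∑ i, marginal f (sol i) (N i) ≤ astar * f S :=
    sum_le_mul_of_isGreatest_fractionalPackingValues hastar (fun i => by simp)
      (hnorm ▸ hmono _ _ (empty_subset S))
      (fun i => sub_nonneg.2 (hmono _ _ subset_union_right)) hclique
  calc f (univ.biUnion opt)
      ≤ f (univ.biUnion opt ∪ S) := hmono _ _ subset_union_left
    _ ≤ f S + ∑ i, marginal f (opt i) (N i) := by
        have := marginal_biUnion_le_sum_marginal hmono hsub opt N univ hNS
        rw [marginal] at this
        linarith
    _ ≤ f S + ∑ i, marginal f (sol i) (N i) :=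
        add_le_add_right (sum_le_sum fun i _ => sub_le_sub_right (hgreedy i _ (hoptX i)) _) _
    _ ≤ (astar + 1) * f S := by linarith

/-- lower bound `γ(G) ≥ 1/(α*(G)+1)` for the generalized distributed
greedy algorithm, stated as: for every instance, `f(x^opt) ≤ (α*(G)+1) · f(x^sol)`. -/
theorem generalized_greedy_lower_bound {α : Type*} [DecidableEq α] {n : ℕ}
    (E : Fin n → Fin n → Prop) [DecidableRel E]
    (hE : ∀ i j, E i j → i < j)
    (astar : ℝ)
    (hastar : IsGreatest {s : ℝ | ∃ z : Fin n → ℝ,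
      (∀ i, 0 ≤ z i) ∧
      (∀ c : Finset (Fin n), (∀ i ∈ c, ∀ j ∈ c, i ≠ j → E i j ∨ E j i) →
        ∑ i ∈ c, z i ≤ 1) ∧
      s = ∑ i, z i} astar)
    (f : Finset α → ℝ)
    (hnorm : f ∅ = 0)
    (hmono : ∀ A B : Finset α, A ⊆ B → f A ≤ f B)
    (hsub : ∀ A B : Finset α, A ⊆ B → ∀ x ∉ B,
      f (insert x B) - f B ≤ f (insert x A) - f A)
    (X : Fin n → Finset (Finset α))
    (sol opt : Fin n → Finset α)
    (hsolX : ∀ i, sol i ∈ X i)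
    (hgreedy : ∀ i : Fin n, ∀ y ∈ X i,
      f (y ∪ (univ.filter (fun j => E j i)).biUnion sol) ≤
        f (sol i ∪ (univ.filter (fun j => E j i)).biUnion sol))
    (hoptX : ∀ i, opt i ∈ X i)
    (hopt : ∀ y : Fin n → Finset α, (∀ i, y i ∈ X i) →
      f (univ.biUnion y) ≤ f (univ.biUnion opt)) :
    f (univ.biUnion opt) ≤ (astar + 1) * f (univ.biUnion sol) :=
  generalized_greedy_lower_bound_general E hE astar hastar f hnorm hmono hsub X sol opt hgreedy
    hoptX
end

section
/- If a directed acyclic graph G (edges respecting the agent ordering) does not have the Sibling Property, then G has a unique maximum independent set. -/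
open Finset

/-- `J` is an independent set of the digraph `E` (edges viewed as undirected). -/
def Indep {n : ℕ} (E : Fin n → Fin n → Prop) (J : Finset (Fin n)) : Prop :=
  ∀ a ∈ J, ∀ b ∈ J, a ≠ b → ¬ (E a b ∨ E b a)

/-- `J` is a maximum independent set. -/
def MaxIndep {n : ℕ} (E : Fin n → Fin n → Prop) (J : Finset (Fin n)) : Prop :=
  Indep E J ∧ ∀ J' : Finset (Fin n), Indep E J' → J'.card ≤ J.card

/-- `G` has the Sibling Property: some maximum independent set contains a node
with an outgoing edge to a node outside the set. -/
def SiblingProperty {n : ℕ} (E : Fin n → Fin n → Prop) : Prop :=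
  ∃ (J : Finset (Fin n)) (w i : Fin n), MaxIndep E J ∧ w ∉ J ∧ i ∈ J ∧ E i w

/-- Without the Sibling Property, members of a maximum independent set have no
outgoing edges at all. -/
lemma no_out_of_not_sibling {n : ℕ} (E : Fin n → Fin n → Prop)
    (hE : ∀ i j, E i j → i < j) (hSP : ¬ SiblingProperty E)
    {J : Finset (Fin n)} (hJ : MaxIndep E J) {i : Fin n} (hi : i ∈ J) :
    ∀ w, ¬ E i w := by
  intro w hw
  by_cases hwJ : w ∈ J
  · by_cases hiw : i = w
    · exact absurd (hE i w hw) (by simp [hiw])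
    · exact hJ.1 i hi w hwJ hiw (Or.inl hw)
  · exact hSP ⟨J, w, i, hJ, hwJ, hi, hw⟩

/-- without the Sibling Property, the maximum independent set is unique. -/
theorem unique_max_indep_of_not_sibling {n : ℕ}
    (E : Fin n → Fin n → Prop)
    (hE : ∀ i j, E i j → i < j)
    (hSP : ¬ SiblingProperty E) :
    ∃! J : Finset (Fin n), MaxIndep E J := by
  classical
  -- Existence
  have hex : ∃ J : Finset (Fin n), MaxIndep E J := by
    set S := (Finset.univ : Finset (Finset (Fin n))).filter (fun J => Indep E J) with hS
    have hne : S.Nonempty := ⟨∅, by simp [hS, Indep]⟩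
    obtain ⟨J, hJS, hmax⟩ := S.exists_max_image Finset.card hne
    refine ⟨J, ?_, ?_⟩
    · exact (Finset.mem_filter.mp hJS).2
    · intro J' hJ'
      exact hmax J' (Finset.mem_filter.mpr ⟨Finset.mem_univ _, hJ'⟩)
  obtain ⟨J, hJ⟩ := hex
  refine ⟨J, hJ, ?_⟩
  -- Uniqueness: show any max indep J' equals J.
  -- Key: an element of one max set can be inserted into the other.
  have key : ∀ J₁ J₂ : Finset (Fin n), MaxIndep E J₁ → MaxIndep E J₂ →
      ∀ x ∈ J₁, x ∈ J₂ := by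
    intro J₁ J₂ h₁ h₂ x hx
    by_contra hxJ₂
    have hind : Indep E (insert x J₂) := by
      intro a ha b hb hab
      rcases Finset.mem_insert.mp ha with rfl | ha'
      · rcases Finset.mem_insert.mp hb with rfl | hb'
        · exact absurd rfl hab
        · rintro (h | h)
          · exact no_out_of_not_sibling E hE hSP h₁ hx b h
          · exact no_out_of_not_sibling E hE hSP h₂ hb' a h
      · rcases Finset.mem_insert.mp hb with rfl | hb'
        · rintro (h | h)
          · exact no_out_of_not_sibling E hE hSP h₂ ha' b h
          · exact no_out_of_not_sibling E hE hSP h₁ hx a h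
        · exact h₂.1 a ha' b hb' hab
    have := h₂.2 _ hind
    rw [Finset.card_insert_of_notMem hxJ₂] at this
    omega
  intro J' hJ'
  apply Finset.Subset.antisymm
  · intro x hx; exact key J' J hJ' hJ x hx
  · intro x hx; exact key J J' hJ hJ' x hx
end

section
/- If a directed acyclic graph G on nodes {1,...,n} (edges respecting the ordering) lacks the Sibling Property, then its unique maximum independent set contains both node n and node n−1. -/
open Finset

/-- without the Sibling Property, every (hence the unique) maximum
independent set contains the last two nodes (on `n + 2 ≥ 2` nodes). -/
theorem last_two_in_max_indep_of_not_sibling {n : ℕ}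
    (E : Fin (n + 2) → Fin (n + 2) → Prop)
    (hE : ∀ i j, E i j → i < j)
    (hSP : ¬ SiblingProperty E) :
    ∀ J : Finset (Fin (n + 2)), MaxIndep E J →
      (⟨n + 1, by omega⟩ : Fin (n + 2)) ∈ J ∧ (⟨n, by omega⟩ : Fin (n + 2)) ∈ J := by
  intro J hJ
  obtain ⟨hInd, hMax⟩ := hJ
  have noOut : ∀ i ∈ J, ∀ w, w ∉ J → ¬ E i w := by
    intro i hi w hw hE'
    exact hSP ⟨J, w, i, ⟨hInd, hMax⟩, hw, hi, hE'⟩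
  have key : ∀ v : Fin (n+2), v ∉ J → ∃ i ∈ J, E v i := by
    intro v hv
    by_contra h
    push_neg at h
    have hind' : Indep E (insert v J) := by
      intro a ha b hb hab
      simp only [Finset.mem_insert] at ha hb
      rintro (hedge | hedge)
      · rcases ha with rfl | ha
        · rcases hb with rfl | hb
          · exact hab rfl
          · exact h b hb hedge
        · rcases hb with rfl | hb
          · exact noOut a ha b hv hedge
          · exact hInd a ha b hb hab (Or.inl hedge)
      · rcases ha with rfl | ha
        · rcases hb with rfl | hb
          · exact hab rfl
          · exact noOut b hb a hv hedge
        · rcases hb with rfl | hb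
          · exact h a ha hedge
          · exact hInd a ha b hb hab (Or.inr hedge)
    have := hMax _ hind'
    rw [Finset.card_insert_of_notMem hv] at this
    omega
  have hlast : (⟨n+1, by omega⟩ : Fin (n+2)) ∈ J := by
    by_contra hv
    obtain ⟨i, hi, hei⟩ := key _ hv
    have h1 : (n+1 : ℕ) < i.val := hE _ _ hei
    have h2 := i.isLt
    omega
  refine ⟨hlast, ?_⟩
  by_contra hv
  obtain ⟨i, hi, hei⟩ := key _ hv
  have h1 : (n : ℕ) < i.val := hE _ _ hei
  have h2 := i.isLt
  have hib : i = (⟨n+1, by omega⟩ : Fin (n+2)) := by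
    apply Fin.ext; simp; omega
  rw [hib] at hei
  set a : Fin (n+2) := ⟨n, by omega⟩ with ha
  set b : Fin (n+2) := ⟨n+1, by omega⟩ with hb
  have hab : a ≠ b := by simp [ha, hb, Fin.ext_iff]
  set J' := insert a (J.erase b) with hJ'
  have haJ' : a ∉ J.erase b := fun h' => hv (Finset.mem_of_mem_erase h')
  have hIndJ' : Indep E J' := by
    intro x hx y hy hxy
    simp only [hJ', Finset.mem_insert, Finset.mem_erase] at hx hy
    rintro (hedge | hedge)
    · rcases hx with rfl | ⟨hxb, hxJ⟩
      · rcases hy with rfl | ⟨hyb, hyJ⟩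
        · exact hxy rfl
        · have h4 : (n : ℕ) < y.val := hE _ _ hedge
          have h3 := y.isLt
          exact hyb (by apply Fin.ext; simp [hb]; omega)
      · rcases hy with rfl | ⟨hyb, hyJ⟩
        · exact noOut x hxJ a hv hedge
        · exact hInd x hxJ y hyJ hxy (Or.inl hedge)
    · rcases hx with rfl | ⟨hxb, hxJ⟩
      · rcases hy with rfl | ⟨hyb, hyJ⟩
        · exact hxy rfl
        · exact noOut y hyJ a hv hedge
      · rcases hy with rfl | ⟨hyb, hyJ⟩
        · have h4 : (n : ℕ) < x.val := hE _ _ hedge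
          have h3 := x.isLt
          exact hxb (by apply Fin.ext; simp [hb]; omega)
        · exact hInd x hxJ y hyJ hxy (Or.inr hedge)
  have hcard : J'.card = J.card := by
    rw [hJ', Finset.card_insert_of_notMem haJ', Finset.card_erase_of_mem hlast]
    have : 1 ≤ J.card := Finset.card_pos.mpr ⟨b, hlast⟩
    omega
  have hMax' : MaxIndep E J' := ⟨hIndJ', fun J'' hJ'' => by rw [hcard]; exact hMax _ hJ''⟩
  have hbJ' : b ∉ J' := by
    simp only [hJ', Finset.mem_insert, Finset.mem_erase]
    push_neg
    exact ⟨hab.symm, fun h' => absurd rfl h'⟩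
  have haJ'' : a ∈ J' := Finset.mem_insert_self _ _
  exact hSP ⟨J', b, a, hMax', hbJ', haJ'', hei⟩
end

section
/- If a graph G lacks the Sibling Property and J is its unique maximum independent set, then every node outside J has edges to at least 2 nodes in J (i.e., J is a perfect independent set). -/
open Finset

/-- without the Sibling Property, every node outside a maximum
independent set `J` is adjacent to at least 2 nodes of `J`. -/
theorem perfect_indep_set_of_not_sibling {n : ℕ}
    (E : Fin n → Fin n → Prop) [DecidableRel E]
    (hE : ∀ i j, E i j → i < j)
    (hSP : ¬ SiblingProperty E) :
    ∀ J : Finset (Fin n), MaxIndep E J →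
      ∀ v : Fin n, v ∉ J →
        2 ≤ (J.filter (fun j => E v j ∨ E j v)).card := by
  intro J hJ v hv
  set S := J.filter (fun j => E v j ∨ E j v) with hS
  -- no edge from a member of J to v
  have hnoJv : ∀ j ∈ J, ¬ E j v := by
    intro j hj hjv
    exact hSP ⟨J, v, j, hJ, hv, hj, hjv⟩
  by_contra hlt
  push_neg at hlt
  interval_cases h : S.card
  · -- S empty : insert v J is a bigger independent set
    have hSe : S = ∅ := Finset.card_eq_zero.mp h
    have hnone : ∀ j ∈ J, ¬ (E v j ∨ E j v) := by
      intro j hj hedge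
      have : j ∈ S := Finset.mem_filter.mpr ⟨hj, hedge⟩
      simp [hSe] at this
    have hind : Indep E (insert v J) := by
      intro a ha b hb hab
      rcases Finset.mem_insert.mp ha with h1 | h1
      · rcases Finset.mem_insert.mp hb with h2 | h2
        · exact absurd (h1.trans h2.symm) hab
        · subst h1; exact hnone b h2
      · rcases Finset.mem_insert.mp hb with h2 | h2
        · subst h2
          intro hor
          exact hnone a h1 (Or.symm hor)
        · exact hJ.1 a h1 b h2 hab
    have := hJ.2 _ hind
    rw [Finset.card_insert_of_notMem hv] at this
    omega
  · -- S = {j0} : swap j0 with v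
    obtain ⟨j0, hj0⟩ := Finset.card_eq_one.mp h
    have hj0S : j0 ∈ S := by simp [hj0]
    have hj0J : j0 ∈ J := (Finset.mem_filter.mp hj0S).1
    have hvj0 : E v j0 := by
      rcases (Finset.mem_filter.mp hj0S).2 with h1 | h1
      · exact h1
      · exact absurd h1 (hnoJv j0 hj0J)
    have hnone : ∀ j ∈ J, j ≠ j0 → ¬ (E v j ∨ E j v) := by
      intro j hj hne hedge
      have : j ∈ S := Finset.mem_filter.mpr ⟨hj, hedge⟩
      rw [hj0] at this
      exact hne (Finset.mem_singleton.mp this)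
    set J' := insert v (J.erase j0) with hJ'
    have hvne : v ≠ j0 := fun hh => hv (hh ▸ hj0J)
    have hind : Indep E J' := by
      intro a ha b hb hab
      rcases Finset.mem_insert.mp ha with h1 | h1
      · rcases Finset.mem_insert.mp hb with h2 | h2
        · exact absurd (h1.trans h2.symm) hab
        · subst h1
          exact hnone b (Finset.mem_of_mem_erase h2) (Finset.ne_of_mem_erase h2)
      · rcases Finset.mem_insert.mp hb with h2 | h2
        · subst h2
          intro hor
          exact hnone a (Finset.mem_of_mem_erase h1) (Finset.ne_of_mem_erase h1)
            (Or.symm hor)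
        · exact hJ.1 a (Finset.mem_of_mem_erase h1) b (Finset.mem_of_mem_erase h2) hab
    have hvnot : v ∉ J.erase j0 := fun hh => hv (Finset.mem_of_mem_erase hh)
    have hcard : J'.card = J.card := by
      rw [hJ', Finset.card_insert_of_notMem hvnot,
        Finset.card_erase_of_mem hj0J]
      have : 1 ≤ J.card := Finset.card_pos.mpr ⟨j0, hj0J⟩
      omega
    have hmax : MaxIndep E J' := ⟨hind, fun J'' hJ'' => hcard ▸ hJ.2 J'' hJ''⟩
    have hj0not : j0 ∉ J' := by
      simp [hJ', hvne.symm]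
    exact hSP ⟨J', j0, v, hmax, hj0not, Finset.mem_insert_self _ _, hvj0⟩
end

section
/- Among all n-vertex graphs with independence number at most r, the complement Turán graph \overline{T(n,r)} has the minimum number of edges. -/
/-!
Independent sets of `G` are cliques of `Gᶜ`, so `Gᶜ` is `K_{r+1}`-free and Turán's theorem bounds
its edge count by that of `turanGraph n r`. Passing back to complements, `G` has at least as many
edges as `(turanGraph n r)ᶜ`, the disjoint union of cliques on the residue classes mod `r`:
`n % r` classes of size `n / r + 1` and `r - n % r` of size `n / r`, which gives `M n r` edges.
-/

open Finset

/-- `M n r`: the number of edges of the complement Turán graph `T̄(n,r)`. -/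
def M (n r : ℕ) : ℕ :=
  (n % r) * ((n / r + 1) * (n / r) / 2) + (r - n % r) * ((n / r) * (n / r - 1) / 2)

theorem Fin.card_filter_val_mod_eq {n r i : ℕ} (hi : i < r) :
    #{v : Fin n | (v : ℕ) % r = i} = n / r + if i < n % r then 1 else 0 := by
  rw [card_filter, Fin.sum_univ_eq_sum_range (fun x => if x % r = i then 1 else 0),
    ← card_filter, ← Nat.count_eq_card_filter_range, ← Nat.mod_eq_of_lt hi]
  exact Nat.count_modEq_card n (i.zero_le.trans_lt hi) i

theorem sum_range_choose_two_eq_M (n r : ℕ) :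
    ∑ i ∈ range r, (n / r + if i < n % r then 1 else 0).choose 2 = M n r := by
  rcases r.eq_zero_or_pos with rfl | hr
  · simp [M]
  calc _ = ∑ _i ∈ range (n % r), (n / r + 1).choose 2 +
        ∑ _i ∈ Ico (n % r) r, (n / r).choose 2 := by
        rw [← sum_range_add_sum_Ico _ (Nat.mod_lt n hr).le]
        congr 1 <;> refine sum_congr rfl fun i hi => ?_
        · rw [if_pos (mem_range.mp hi)]
        · rw [if_neg (mem_Ico.mp hi).1.not_gt, add_zero]
    _ = M n r := by simp [Nat.choose_two_right, M]

namespace SimpleGraph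

variable {V ι : Type*}

theorem cliqueFree_compl_of_card_le {r : ℕ} {G : SimpleGraph V}
    (h : ∀ s : Finset V, (∀ a ∈ s, ∀ b ∈ s, ¬ G.Adj a b) → #s ≤ r) :
    Gᶜ.CliqueFree (r + 1) := by
  intro s hs
  have hr := h s fun a ha b hb hab => (hs.isClique ha hb hab.ne).2 hab
  have hcard := hs.card_eq
  omega

variable [Fintype V] [DecidableEq V]

theorem card_edgeFinset_add_card_edgeFinset_compl (G : SimpleGraph V) [DecidableRel G.Adj] :
    #G.edgeFinset + #Gᶜ.edgeFinset = (Fintype.card V).choose 2 := by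
  have hcompl : Gᶜ.edgeFinset = (⊤ : SimpleGraph V).edgeFinset \ G.edgeFinset := by
    ext e; induction e; simp
  rw [hcompl, card_sdiff_of_subset (edgeFinset_mono le_top),
    card_edgeFinset_top_eq_card_choose_two, Nat.add_sub_cancel']
  exact card_edgeFinset_le_card_choose_two

variable [DecidableEq ι] (f : V → ι)

-- `((⊤ : SimpleGraph ι).comap f)ᶜ` is the disjoint union of cliques on the fibres of `f`.
theorem degree_compl_comap_top (v : V) :
    ((⊤ : SimpleGraph ι).comap f)ᶜ.degree v = #{w | f w = f v} - 1 := by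
  have hnbr : ((⊤ : SimpleGraph ι).comap f)ᶜ.neighborFinset v =
      ({w | f w = f v} : Finset V).erase v := by
    ext w
    simp [ne_comm, eq_comm (a := f w)]
  rw [← card_neighborFinset_eq_degree, hnbr, card_erase_of_mem (by simp)]

theorem card_edgeFinset_compl_comap_top {t : Finset ι} (ht : ∀ v, f v ∈ t) :
    #((⊤ : SimpleGraph ι).comap f)ᶜ.edgeFinset = ∑ i ∈ t, (#{v | f v = i}).choose 2 := by
  have hdouble : 2 * #((⊤ : SimpleGraph ι).comap f)ᶜ.edgeFinset =
      2 * ∑ i ∈ t, (#{v | f v = i}).choose 2 := by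
    rw [← sum_degrees_eq_twice_card_edges, ← sum_fiberwise_of_maps_to (fun v _ => ht v),
      mul_sum]
    refine sum_congr rfl fun i _ => ?_
    rw [sum_congr rfl fun v hv => by rw [degree_compl_comap_top, (mem_filter.mp hv).2],
      sum_const, smul_eq_mul, Nat.choose_two_right,
      Nat.mul_div_cancel' (Nat.even_mul_pred_self _).two_dvd]
  omega

theorem turanGraph_eq_comap_top (n r : ℕ) :
    turanGraph n r = (⊤ : SimpleGraph ℕ).comap fun v : Fin n => (v : ℕ) % r := by
  ext; simp [turanGraph_adj]

theorem card_edgeFinset_compl_turanGraph {n r : ℕ} (hr : 0 < r) :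
    #(turanGraph n r)ᶜ.edgeFinset = M n r := by
  have h := card_edgeFinset_compl_comap_top (fun v : Fin n => (v : ℕ) % r)
    (fun v => mem_range.mpr (Nat.mod_lt _ hr))
  rw [sum_congr rfl fun i hi =>
      congrArg (Nat.choose · 2) (Fin.card_filter_val_mod_eq (mem_range.mp hi)),
    sum_range_choose_two_eq_M] at h
  convert h using 4
  exact turanGraph_eq_comap_top n r

end SimpleGraph

open SimpleGraph

/-- among all `n`-vertex graphs with independence number at most `r`,
the complement Turán graph has the fewest edges: any such graph has at least
`M n r` edges. -/
theorem complement_turan_min_edges {n r : ℕ} (hr : 0 < r)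
    (G : SimpleGraph (Fin n)) [DecidableRel G.Adj]
    (hα : ∀ J : Finset (Fin n), (∀ a ∈ J, ∀ b ∈ J, ¬ G.Adj a b) → J.card ≤ r) :
    M n r ≤ G.edgeFinset.card := by
  have hturan : #Gᶜ.edgeFinset ≤ #(turanGraph n r).edgeFinset :=
    (isTuranMaximal_turanGraph hr).2 (cliqueFree_compl_of_card_le hα)
  have hG := card_edgeFinset_add_card_edgeFinset_compl G
  have hT := card_edgeFinset_add_card_edgeFinset_compl (turanGraph n r)
  rw [← card_edgeFinset_compl_turanGraph hr]
  omega
end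

section
/- If G is a directed acyclic graph on n nodes without the Sibling Property and with independence number α(G) = r, then the number of edges m of G satisfies m ≥ M(n−r, r−1) + 2(n−r), where M is the edge count of the complement Turán graph. -/
/-!
Let `J` be a maximum independent set. Without the Sibling Property no arc leaves `J`, and each
vertex `w ∉ J` has at least two out-neighbours in `J`: with none, `J ∪ {w}` is independent; with
exactly one, `i₀`, the exchange `J - i₀ + w` is a maximum independent set that `w → i₀` leaves.
This gives the `2 (n - r)` arcs from `Jᶜ` into `J`. Moreover an independent set inside `Jᶜ` of size
`r` would be maximum and left by an arc into `J`, so `Jᶜ` has independence number at most `r - 1`.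
A digraph on `N` vertices with independence number at most `t` has at least `M N t` arcs, by
greedily removing a largest independent set `I`: every remaining vertex is adjacent to `I`, and
`M N t ≤ M (N - |I|) t + (N - |I|)` because `M (N + t) t = M N t + N` and `M · t` is monotone.
-/

open Finset

lemma M_mul_add {t ρ : ℕ} (q : ℕ) (hρ : ρ < t) :
    M (t * q + ρ) t = ρ * (q + 1).choose 2 + (t - ρ) * q.choose 2 := by
  have ht : 0 < t := by omega
  simp only [M, Nat.choose_two_right, Nat.mul_add_div ht, Nat.mul_add_mod, Nat.div_eq_of_lt hρ,
    Nat.mod_eq_of_lt hρ, add_zero, Nat.add_sub_cancel]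

lemma exists_mul_add_of_pos {t : ℕ} (ht : 0 < t) (N : ℕ) : ∃ q ρ, ρ < t ∧ N = t * q + ρ :=
  ⟨N / t, N % t, Nat.mod_lt N ht, (Nat.div_add_mod N t).symm⟩

lemma choose_two_succ (q : ℕ) : (q + 1).choose 2 = q.choose 2 + q := by
  rw [Nat.choose_succ_succ, Nat.choose_one_right, add_comm]

lemma M_add_self {t : ℕ} (ht : 0 < t) (N : ℕ) : M (N + t) t = M N t + N := by
  obtain ⟨q, ρ, hρ, rfl⟩ := exists_mul_add_of_pos ht N
  obtain ⟨c, rfl⟩ : ∃ c, t = ρ + c := ⟨t - ρ, by omega⟩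
  rw [show (ρ + c) * q + ρ + (ρ + c) = (ρ + c) * (q + 1) + ρ by ring, M_mul_add _ hρ,
    M_mul_add _ hρ, choose_two_succ (q + 1), choose_two_succ q, Nat.add_sub_cancel_left]
  ring

lemma M_mono (t : ℕ) : Monotone (M · t) := by
  rcases t.eq_zero_or_pos with rfl | ht
  · intro _ _ _; simp [M]
  refine monotone_nat_of_le_succ fun N => ?_
  obtain ⟨q, ρ, hρ, rfl⟩ := exists_mul_add_of_pos ht N
  obtain ⟨c, rfl⟩ : ∃ c, t = ρ + 1 + c := ⟨t - (ρ + 1), by omega⟩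
  rcases c.eq_zero_or_pos with rfl | hc
  · rw [show (ρ + 1 + 0) * q + ρ + 1 = (ρ + 1 + 0) * (q + 1) + 0 by ring, M_mul_add _ hρ,
      M_mul_add _ ht, choose_two_succ q, choose_two_succ (q + 1)]
    simp only [Nat.add_sub_cancel_left, add_zero, zero_mul, zero_add, Nat.sub_zero]
    nlinarith
  · rw [Nat.add_assoc _ ρ 1, M_mul_add _ hρ, M_mul_add _ (by omega), choose_two_succ q,
      show ρ + 1 + c - ρ = c + 1 by omega, show ρ + 1 + c - (ρ + 1) = c by omega]
    nlinarith

lemma M_le_M_sub_add {N s t : ℕ} (ht : 0 < t) (hst : s ≤ t) (hsN : s ≤ N) :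
    M N t ≤ M (N - s) t + (N - s) :=
  calc M N t = M (N - s + s) t := by rw [Nat.sub_add_cancel hsN]
    _ ≤ M (N - s + t) t := M_mono t (by omega)
    _ = M (N - s) t + (N - s) := M_add_self ht _

section Digraph

variable {n : ℕ} (E : Fin n → Fin n → Prop)

def arcs [DecidableRel E] (s t : Finset (Fin n)) : Finset (Fin n × Fin n) :=
  (s ×ˢ t).filter fun p => E p.1 p.2

lemma card_arcs_eq_sum_left [DecidableRel E] (s t : Finset (Fin n)) :
    #(arcs E s t) = ∑ a ∈ s, #(t.filter (E a ·)) := by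
  simp only [arcs, card_filter, sum_product]

lemma card_arcs_eq_sum_right [DecidableRel E] (s t : Finset (Fin n)) :
    #(arcs E s t) = ∑ b ∈ t, #(s.filter (E · b)) := by
  simp only [arcs, card_filter, sum_product_right]

lemma card_arcs_union_left [DecidableRel E] {s s' : Finset (Fin n)} (h : Disjoint s s')
    (t : Finset (Fin n)) :
    #(arcs E (s ∪ s') t) = #(arcs E s t) + #(arcs E s' t) := by
  rw [arcs, union_product, filter_union, card_union_of_disjoint]
  · rfl
  · exact disjoint_filter_filter (disjoint_product.mpr (Or.inl h))

lemma card_arcs_union_right [DecidableRel E] (s : Finset (Fin n)) {t t' : Finset (Fin n)}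
    (h : Disjoint t t') :
    #(arcs E s (t ∪ t')) = #(arcs E s t) + #(arcs E s t') := by
  rw [arcs, product_union, filter_union, card_union_of_disjoint]
  · rfl
  · exact disjoint_filter_filter (disjoint_product.mpr (Or.inr h))

lemma card_arcs_add_le [DecidableRel E] {s t : Finset (Fin n)} (h : Disjoint s t) :
    #(arcs E s s) + (#(arcs E s t) + #(arcs E t s)) ≤ #(arcs E (s ∪ t) (s ∪ t)) := by
  rw [card_arcs_union_left E h, card_arcs_union_right E s h, card_arcs_union_right E t h]
  omega

lemma card_le_card_arcs_add [DecidableRel E] {s t : Finset (Fin n)}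
    (h : ∀ a ∈ s, ∃ b ∈ t, E a b ∨ E b a) :
    #s ≤ #(arcs E s t) + #(arcs E t s) := by
  rw [card_arcs_eq_sum_left, card_arcs_eq_sum_right, ← sum_add_distrib]
  refine card_eq_sum_ones s ▸ sum_le_sum fun a ha => ?_
  obtain ⟨b, hb, hab⟩ := h a ha
  calc 1 ≤ #(t.filter fun b => E a b ∨ E b a) := card_pos.mpr ⟨b, mem_filter.mpr ⟨hb, hab⟩⟩
    _ ≤ _ := by rw [filter_or]; exact card_union_le _ _

lemma Indep.mono {I J : Finset (Fin n)} (hJ : Indep E J) (h : I ⊆ J) : Indep E I :=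
  fun a ha b hb => hJ a (h ha) b (h hb)

lemma Indep.insert {J : Finset (Fin n)} {w : Fin n} (hJ : Indep E J)
    (hw : ∀ j ∈ J, ¬(E w j ∨ E j w)) : Indep E (insert w J) := by
  intro a ha b hb hab
  rw [mem_insert] at ha hb
  rcases ha with rfl | ha <;> rcases hb with rfl | hb
  · exact absurd rfl hab
  · exact hw b hb
  · exact fun h => hw a ha h.symm
  · exact hJ a ha b hb hab

lemma indep_singleton (v : Fin n) : Indep E {v} :=
  fun _ ha _ hb hab => absurd ((mem_singleton.1 ha).trans (mem_singleton.1 hb).symm) hab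

lemma exists_indep_subset_forall_card_le (V : Finset (Fin n)) :
    ∃ I ⊆ V, Indep E I ∧ ∀ I' ⊆ V, Indep E I' → #I' ≤ #I := by
  classical
  obtain ⟨I, hI, hmax⟩ :=
    (V.powerset.filter (Indep E)).exists_max_image card ⟨∅, by simp [Indep]⟩
  simp only [mem_filter, mem_powerset, and_imp] at hI hmax
  exact ⟨I, hI.1, hI.2, hmax⟩

lemma exists_adj_of_forall_card_le {V I : Finset (Fin n)} (hIV : I ⊆ V) (hI : Indep E I)
    (hmax : ∀ I' ⊆ V, Indep E I' → #I' ≤ #I) {w : Fin n} (hwV : w ∈ V) (hwI : w ∉ I) :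
    ∃ i ∈ I, E w i ∨ E i w := by
  by_contra h
  simp only [not_exists, not_and] at h
  have := hmax _ (insert_subset hwV hIV) (hI.insert E h)
  rw [card_insert_of_notMem hwI] at this
  omega

lemma M_le_card_arcs [DecidableRel E] {t : ℕ} (V : Finset (Fin n))
    (hV : ∀ I ⊆ V, Indep E I → #I ≤ t) :
    M #V t ≤ #(arcs E V V) := by
  induction V using Finset.strongInduction with
  | H V ih =>
  rcases V.eq_empty_or_nonempty with rfl | ⟨v, hv⟩
  · simp [M]
  obtain ⟨I, hIV, hI, hmax⟩ := exists_indep_subset_forall_card_le E V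
  have hI_pos : 0 < #I := by
    simpa using hmax {v} (singleton_subset_iff.2 hv) (indep_singleton E v)
  have hrest : M #(V \ I) t ≤ #(arcs E (V \ I) (V \ I)) :=
    ih _ (sdiff_ssubset hIV (card_pos.1 hI_pos)) fun J hJ => hV J (hJ.trans sdiff_subset)
  have hlink : #(V \ I) ≤ #(arcs E (V \ I) I) + #(arcs E I (V \ I)) :=
    card_le_card_arcs_add E fun w hw =>
      exists_adj_of_forall_card_le E hIV hI hmax (mem_sdiff.1 hw).1 (mem_sdiff.1 hw).2
  calc M #V t ≤ M (#V - #I) t + (#V - #I) :=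
        M_le_M_sub_add (hI_pos.trans_le (hV I hIV hI)) (hV I hIV hI) (card_le_card hIV)
    _ ≤ #(arcs E (V \ I) (V \ I)) + (#(arcs E (V \ I) I) + #(arcs E I (V \ I))) := by
        rw [← card_sdiff_of_subset hIV]; omega
    _ ≤ #(arcs E (V \ I ∪ I) (V \ I ∪ I)) := card_arcs_add_le E sdiff_disjoint
    _ = #(arcs E V V) := by rw [sdiff_union_of_subset hIV]

lemma MaxIndep.of_card_le {J K : Finset (Fin n)} (hJ : MaxIndep E J) (hK : Indep E K)
    (h : #J ≤ #K) : MaxIndep E K :=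
  ⟨hK, fun I hI => (hJ.2 I hI).trans h⟩

end Digraph

section NotSibling

variable {n : ℕ} {E : Fin n → Fin n → Prop} {J : Finset (Fin n)}

lemma exists_arc_into_maxIndep (hSP : ¬ SiblingProperty E) (hJ : MaxIndep E J) {w : Fin n}
    (hw : w ∉ J) : ∃ i ∈ J, E w i := by
  obtain ⟨i, hi, hwi | hiw⟩ := exists_adj_of_forall_card_le E (subset_univ J) hJ.1
    (fun I _ hI => hJ.2 I hI) (mem_univ w) hw
  · exact ⟨i, hi, hwi⟩
  · exact absurd ⟨J, w, i, hJ, hw, hi, hiw⟩ hSP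

lemma one_lt_card_filter_arc_into_maxIndep [DecidableRel E] (hSP : ¬ SiblingProperty E)
    (hJ : MaxIndep E J) {w : Fin n} (hw : w ∉ J) : 1 < #(J.filter (E w ·)) := by
  obtain ⟨i₀, hi₀, hwi₀⟩ := exists_arc_into_maxIndep hSP hJ hw
  refine one_lt_card.2 ⟨i₀, mem_filter.2 ⟨hi₀, hwi₀⟩, ?_⟩
  by_contra h
  simp only [mem_filter, ne_eq, not_exists, not_and, and_imp, not_not] at h
  have hw' : w ∉ J.erase i₀ := fun h' => hw (mem_of_mem_erase h')
  have hswap : Indep E (insert w (J.erase i₀)) := by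
    refine (hJ.1.mono E (erase_subset i₀ J)).insert E fun j hj => ?_
    rintro (hwj | hjw)
    · exact ne_of_mem_erase hj (h j (mem_of_mem_erase hj) hwj).symm
    · exact hSP ⟨J, w, j, hJ, hw, mem_of_mem_erase hj, hjw⟩
  have hcard : #J ≤ #(insert w (J.erase i₀)) := by
    rw [card_insert_of_notMem hw', card_erase_of_mem hi₀]
    omega
  refine hSP ⟨_, i₀, w, hJ.of_card_le E hswap hcard, ?_, mem_insert_self w _, hwi₀⟩
  simp [ne_of_mem_of_not_mem hi₀ hw]

lemma card_lt_of_indep_of_disjoint (hSP : ¬ SiblingProperty E) (hJ : MaxIndep E J)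
    {I : Finset (Fin n)} (hI : Indep E I) (hIne : I.Nonempty) (hIJ : Disjoint I J) :
    #I < #J := by
  refine (hJ.2 I hI).lt_of_ne fun hcard => ?_
  obtain ⟨w, hw⟩ := hIne
  obtain ⟨j, hj, hwj⟩ := exists_arc_into_maxIndep hSP hJ (disjoint_left.1 hIJ hw)
  exact hSP ⟨I, j, w, hJ.of_card_le E hI hcard.ge, disjoint_right.1 hIJ hj, hw, hwj⟩

end NotSibling

theorem edge_bound_of_not_sibling_general {n r : ℕ}
    (E : Fin n → Fin n → Prop) [DecidableRel E]
    (hSP : ¬ SiblingProperty E)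
    (hub : ∀ J : Finset (Fin n), Indep E J → J.card ≤ r)
    (hex : ∃ J : Finset (Fin n), Indep E J ∧ J.card = r) :
    M (n - r) (r - 1) + 2 * (n - r) ≤
      ((univ : Finset (Fin n × Fin n)).filter (fun p => E p.1 p.2)).card := by
  obtain ⟨J, hJ, hJr⟩ := hex
  have hmax : MaxIndep E J := ⟨hJ, fun I hI => hJr ▸ hub I hI⟩
  have hJc : #Jᶜ = n - r := by rw [card_compl, Fintype.card_fin, hJr]
  have hinside : M (n - r) (r - 1) ≤ #(arcs E Jᶜ Jᶜ) := by
    refine hJc ▸ M_le_card_arcs E Jᶜ fun I hI hIind => ?_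
    rcases I.eq_empty_or_nonempty with rfl | hIne
    · simp
    · have := card_lt_of_indep_of_disjoint hSP hmax hIind hIne
        (subset_compl_iff_disjoint_right.1 hI)
      omega
  have hinto : 2 * (n - r) ≤ #(arcs E Jᶜ J) := by
    rw [card_arcs_eq_sum_left, ← hJc, mul_comm, ← smul_eq_mul]
    exact card_nsmul_le_sum _ _ _ fun w hw =>
      one_lt_card_filter_arc_into_maxIndep hSP hmax (mem_compl.1 hw)
  calc _ ≤ #(arcs E Jᶜ Jᶜ) + (#(arcs E Jᶜ J) + #(arcs E J Jᶜ)) := by omega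
    _ ≤ #(arcs E (Jᶜ ∪ J) (Jᶜ ∪ J)) := card_arcs_add_le E disjoint_compl_left
    _ = _ := by rw [← sup_eq_union, compl_sup_eq_top, top_eq_univ, arcs, univ_product_univ]

/-- a DAG on `n` nodes without the Sibling Property and with
independence number `r` has at least `M (n−r) (r−1) + 2(n−r)` edges. -/
theorem edge_bound_of_not_sibling {n r : ℕ}
    (E : Fin n → Fin n → Prop) [DecidableRel E]
    (hE : ∀ i j, E i j → i < j)
    (hSP : ¬ SiblingProperty E)
    (hub : ∀ J : Finset (Fin n), Indep E J → J.card ≤ r)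
    (hex : ∃ J : Finset (Fin n), Indep E J ∧ J.card = r) :
    M (n - r) (r - 1) + 2 * (n - r) ≤
      ((univ : Finset (Fin n × Fin n)).filter (fun p => E p.1 p.2)).card :=
  edge_bound_of_not_sibling_general E hSP hub hex
end

section
/- For a normalized monotone submodular f and the generalized greedy algorithm on graph G, if y: K(G) → ℝ≥0 is a fractional clique cover (Σ_{c ∋ i} y_c ≥ 1 for every node i), then f(x^opt) ≤ (1 + Σ_c y_c) · f(x^sol). -/
/-!
Let `gain i = f(x_i ∪ x_{N_i}) - f(x_{N_i})` be the marginal value of agent `i`'s greedy choice.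
By submodularity and greediness, `f(x^opt) ≤ f(x^sol ∪ x^opt) ≤ f(x^sol) + ∑ᵢ gain i`.
Along a clique, ordered compatibly with the edges, every earlier member is an in-neighbour of
every later one, so the gains telescope and `∑_{i ∈ c} gain i ≤ f(x^sol)`. Averaging over the
fractional clique cover `y` gives `∑ᵢ gain i ≤ (∑_c y_c) f(x^sol)`.
-/

open Finset

/-- `c` is a clique of the digraph `E` (edges viewed as undirected). -/
def IsCliqueE {n : ℕ} (E : Fin n → Fin n → Prop) (c : Finset (Fin n)) : Prop :=
  ∀ i ∈ c, ∀ j ∈ c, i ≠ j → E i j ∨ E j i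

def HasDiminishingReturns {α : Type*} [DecidableEq α] (f : Finset α → ℝ) : Prop :=
  ∀ A B : Finset α, A ⊆ B → ∀ x ∉ B, f (insert x B) - f B ≤ f (insert x A) - f A

section SetFunction

variable {α : Type*} [DecidableEq α] {f : Finset α → ℝ}

theorem HasDiminishingReturns.sub_union_le (hmono : Monotone f)
    (hsub : HasDiminishingReturns f) (A : Finset α) {B C : Finset α} (hBC : B ⊆ C) :
    f (C ∪ A) - f C ≤ f (B ∪ A) - f B := by
  induction A using Finset.induction_on with
  | empty => simp
  | @insert x A _ ih =>
    rw [union_insert, union_insert]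
    by_cases hxC : x ∈ C ∪ A
    · rw [insert_eq_self.2 hxC]
      linarith [hmono (subset_insert x (B ∪ A))]
    · linarith [hsub (B ∪ A) (C ∪ A) (union_subset_union_left hBC) x hxC]

theorem HasDiminishingReturns.sub_biUnion_le_sum {ι : Type*}
    (hmono : Monotone f) (hsub : HasDiminishingReturns f)
    (S : Finset α) (g : ι → Finset α) (T : Finset ι) :
    f (S ∪ T.biUnion g) - f S ≤ ∑ i ∈ T, (f (S ∪ g i) - f S) := by
  classical
  induction T using Finset.induction_on with
  | empty => simp
  | @insert i T hi ih =>
    rw [biUnion_insert, sum_insert hi, union_comm (g i), ← union_assoc]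
    linarith [hsub.sub_union_le hmono (g i) (subset_union_left : S ⊆ S ∪ T.biUnion g)]

end SetFunction

theorem sum_le_mul_of_fractional_cover {ι : Type*} [Fintype ι] [DecidableEq ι]
    {P : Finset ι → Prop} {y : Finset ι → ℝ} {w : ι → ℝ} {B : ℝ}
    (hy0 : ∀ c, 0 ≤ y c) (hyP : ∀ c, ¬ P c → y c = 0)
    (hycover : ∀ i, 1 ≤ ∑ c : Finset ι, if i ∈ c then y c else 0)
    (hw0 : ∀ i, 0 ≤ w i) (hwB : ∀ c, P c → ∑ i ∈ c, w i ≤ B) :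
    ∑ i, w i ≤ (∑ c : Finset ι, y c) * B :=
  calc ∑ i, w i
      ≤ ∑ i, (∑ c : Finset ι, if i ∈ c then y c else 0) * w i :=
        sum_le_sum fun i _ => le_mul_of_one_le_left (hw0 i) (hycover i)
    _ = ∑ c : Finset ι, y c * ∑ i ∈ c, w i := by
        simp_rw [sum_mul, ite_mul, zero_mul]
        rw [sum_comm]
        refine sum_congr rfl fun c _ => ?_
        rw [mul_sum, sum_ite_mem, univ_inter]
    _ ≤ ∑ c : Finset ι, y c * B := by
        refine sum_le_sum fun c _ => ?_
        by_cases hc : P c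
        · exact mul_le_mul_of_nonneg_left (hwB c hc) (hy0 c)
        · simp [hyP c hc]
    _ = (∑ c : Finset ι, y c) * B := (sum_mul ..).symm

section Greedy

variable {α ι : Type*} [DecidableEq α] [Fintype ι] {f : Finset α → ℝ}
  {E : ι → ι → Prop} [DecidableRel E] {sol : ι → Finset α}

variable (E) in
def inNeighbors (i : ι) : Finset ι := univ.filter (fun j => E j i)

variable (f E sol) in
def greedyGain (i : ι) : ℝ :=
  f (sol i ∪ (inNeighbors E i).biUnion sol) - f ((inNeighbors E i).biUnion sol)

theorem greedyGain_nonneg (hmono : Monotone f) (i : ι) : 0 ≤ greedyGain f E sol i :=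
  sub_nonneg.2 (hmono subset_union_right)

theorem sum_greedyGain_le_of_isClique [LinearOrder ι] (hE : ∀ i j, E i j → i < j)
    (hmono : Monotone f) (hsub : HasDiminishingReturns f) {c : Finset ι}
    (hc : ∀ i ∈ c, ∀ j ∈ c, i ≠ j → E i j ∨ E j i) :
    ∑ i ∈ c, greedyGain f E sol i ≤ f (c.biUnion sol) - f ∅ := by
  induction c using Finset.induction_on_max with
  | empty => simp
  | insert a s hlt ih =>
    have ha : a ∉ s := fun h => lt_irrefl a (hlt a h)
    -- an edge between `b ∈ s` and the maximum `a` can only point towards `a`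
    have hs_nbhd : s ⊆ inNeighbors E a := fun b hb => by
      rcases hc b (mem_insert_of_mem hb) a (mem_insert_self a s) (hlt b hb).ne with h | h
      · simpa [inNeighbors] using h
      · exact absurd (hE a b h) (hlt b hb).asymm
    have hgain : greedyGain f E sol a ≤ f (s.biUnion sol ∪ sol a) - f (s.biUnion sol) := by
      rw [greedyGain, union_comm]
      exact hsub.sub_union_le hmono (sol a) (biUnion_subset_biUnion_of_subset_left sol hs_nbhd)
    have hs := ih fun i hi j hj => hc i (mem_insert_of_mem hi) j (mem_insert_of_mem hj)
    rw [sum_insert ha, biUnion_insert, union_comm]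
    linarith

theorem sub_le_greedyGain {X : ι → Finset (Finset α)} {z : Finset α} {S : Finset α} {i : ι}
    (hmono : Monotone f) (hsub : HasDiminishingReturns f)
    (hgreedy : ∀ z ∈ X i, f (z ∪ (inNeighbors E i).biUnion sol) ≤
      f (sol i ∪ (inNeighbors E i).biUnion sol))
    (hz : z ∈ X i) (hS : (inNeighbors E i).biUnion sol ⊆ S) :
    f (S ∪ z) - f S ≤ greedyGain f E sol i := by
  have := hsub.sub_union_le hmono z hS
  rw [union_comm ((inNeighbors E i).biUnion sol) z] at this
  exact this.trans (sub_le_sub_right (hgreedy z hz) _)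

theorem le_add_sum_greedyGain {X : ι → Finset (Finset α)} {opt : ι → Finset α}
    (hmono : Monotone f) (hsub : HasDiminishingReturns f)
    (hgreedy : ∀ i, ∀ z ∈ X i, f (z ∪ (inNeighbors E i).biUnion sol) ≤
      f (sol i ∪ (inNeighbors E i).biUnion sol))
    (hoptX : ∀ i, opt i ∈ X i) :
    f (univ.biUnion opt) ≤ f (univ.biUnion sol) + ∑ i, greedyGain f E sol i := by
  have hgains : ∑ i, (f (univ.biUnion sol ∪ opt i) - f (univ.biUnion sol)) ≤
      ∑ i, greedyGain f E sol i :=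
    sum_le_sum fun i _ => sub_le_greedyGain hmono hsub (hgreedy i) (hoptX i)
      (biUnion_subset_biUnion_of_subset_left sol (subset_univ _))
  linarith [hmono (subset_union_right : univ.biUnion opt ⊆ univ.biUnion sol ∪ univ.biUnion opt),
    hsub.sub_biUnion_le_sum hmono (univ.biUnion sol) opt univ]

end Greedy

theorem fractional_clique_cover_bound_general {α : Type*} [DecidableEq α] {n : ℕ}
    (E : Fin n → Fin n → Prop) [DecidableRel E]
    (hE : ∀ i j, E i j → i < j)
    (y : Finset (Fin n) → ℝ)
    (hy0 : ∀ c, 0 ≤ y c)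
    (hyclique : ∀ c : Finset (Fin n), ¬ IsCliqueE E c → y c = 0)
    (hycover : ∀ i : Fin n, 1 ≤ ∑ c : Finset (Fin n), if i ∈ c then y c else 0)
    (f : Finset α → ℝ)
    (hnorm : f ∅ = 0)
    (hmono : ∀ A B : Finset α, A ⊆ B → f A ≤ f B)
    (hsub : ∀ A B : Finset α, A ⊆ B → ∀ x ∉ B,
      f (insert x B) - f B ≤ f (insert x A) - f A)
    (X : Fin n → Finset (Finset α))
    (sol opt : Fin n → Finset α)
    (hgreedy : ∀ i : Fin n, ∀ z ∈ X i,
      f (z ∪ (univ.filter (fun j => E j i)).biUnion sol) ≤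
        f (sol i ∪ (univ.filter (fun j => E j i)).biUnion sol))
    (hoptX : ∀ i, opt i ∈ X i) :
    f (univ.biUnion opt) ≤
      (1 + ∑ c : Finset (Fin n), y c) * f (univ.biUnion sol) := by
  have hmono : Monotone f := fun A B => hmono A B
  have hopt : f (univ.biUnion opt) ≤ f (univ.biUnion sol) + ∑ i, greedyGain f E sol i :=
    le_add_sum_greedyGain hmono hsub hgreedy hoptX
  have hgains : ∑ i, greedyGain f E sol i ≤ (∑ c, y c) * f (univ.biUnion sol) :=
    sum_le_mul_of_fractional_cover hy0 hyclique hycover (greedyGain_nonneg hmono) fun c hc =>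
      calc ∑ i ∈ c, greedyGain f E sol i ≤ f (c.biUnion sol) - f ∅ :=
            sum_greedyGain_le_of_isClique hE hmono hsub hc
        _ ≤ f (univ.biUnion sol) := by
            rw [hnorm, sub_zero]
            exact hmono (biUnion_subset_biUnion_of_subset_left sol (subset_univ c))
  linarith

/-- if `y` is a fractional clique cover of `G` then the generalized
greedy solution satisfies `f(x^opt) ≤ (1 + Σ_c y_c) · f(x^sol)`. -/
theorem fractional_clique_cover_bound {α : Type*} [DecidableEq α] {n : ℕ}
    (E : Fin n → Fin n → Prop) [DecidableRel E]
    (hE : ∀ i j, E i j → i < j)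
    (y : Finset (Fin n) → ℝ)
    (hy0 : ∀ c, 0 ≤ y c)
    (hyclique : ∀ c : Finset (Fin n), ¬ IsCliqueE E c → y c = 0)
    (hycover : ∀ i : Fin n, 1 ≤ ∑ c : Finset (Fin n), if i ∈ c then y c else 0)
    (f : Finset α → ℝ)
    (hnorm : f ∅ = 0)
    (hmono : ∀ A B : Finset α, A ⊆ B → f A ≤ f B)
    (hsub : ∀ A B : Finset α, A ⊆ B → ∀ x ∉ B,
      f (insert x B) - f B ≤ f (insert x A) - f A)
    (X : Fin n → Finset (Finset α))
    (sol opt : Fin n → Finset α)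
    (hsolX : ∀ i, sol i ∈ X i)
    (hgreedy : ∀ i : Fin n, ∀ z ∈ X i,
      f (z ∪ (univ.filter (fun j => E j i)).biUnion sol) ≤
        f (sol i ∪ (univ.filter (fun j => E j i)).biUnion sol))
    (hoptX : ∀ i, opt i ∈ X i)
    (hopt : ∀ z : Fin n → Finset α, (∀ i, z i ∈ X i) →
      f (univ.biUnion z) ≤ f (univ.biUnion opt)) :
    f (univ.biUnion opt) ≤
      (1 + ∑ c : Finset (Fin n), y c) * f (univ.biUnion sol) :=
  fractional_clique_cover_bound_general E hE y hy0 hyclique hycover f hnorm hmono hsub X sol opt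
    hgreedy hoptX
end
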